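/- Under the assumptions that T is a Gibbs matrix at inverse temperature β₀ for energies E and degeneracies d, and p is the Gibbs distribution at inverse temperature β with q = T p, the two Clausius inequalities hold simultaneously: β₀ ⟨ΔQ⟩ ≤ ΔS ≤ β ⟨ΔQ⟩, where ⟨ΔQ⟩ = E(q) − E(p) and ΔS = S(q) − S(p). -/

import Mathlib

/-!
Write `g_β` for the Gibbs distribution and `D` for relative entropy. Since
`log (g_β n / d n) = -β E n - log Z_β`, for any `r, r'` of equal mass
`S(r') - S(r) = β (E(r') - E(r)) + D(r ‖ g_β) - D(r' ‖ g_β)`.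
At the temperature of `p = g_β` this is `β ⟨ΔQ⟩ - D(q ‖ p) ≤ β ⟨ΔQ⟩` by Gibbs' inequality.
At `β₀` it is `β₀ ⟨ΔQ⟩ + D(p ‖ g_β₀) - D(T p ‖ g_β₀) ≥ β₀ ⟨ΔQ⟩` by the data-processing
inequality for a stochastic matrix fixing `g_β₀`, which is Jensen's inequality for `x log x`.
-/

open Finset Real Matrix

section RelEntropy

variable {ι : Type*} [Fintype ι]

-- Since `log 0 = 0`, terms with `r i = 0` vanish, as in the convention `0 log 0 = 0`.
noncomputable def relEntropy (r s : ι → ℝ) : ℝ := ∑ i, r i * log (r i / s i)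

theorem relEntropy_self (r : ι → ℝ) : relEntropy r r = 0 := by
  refine Finset.sum_eq_zero fun i _ => ?_
  rcases eq_or_ne (r i) 0 with h | h
  · simp [h]
  · simp [div_self h]

theorem relEntropy_eq_sum_mul_mul_log {r s : ι → ℝ} (hs : ∀ i, 0 < s i) :
    relEntropy r s = ∑ i, s i * (r i / s i * log (r i / s i)) :=
  Finset.sum_congr rfl fun i _ => by rw [← mul_assoc, mul_div_cancel₀ _ (hs i).ne']

theorem relEntropy_eq_add {r s t : ι → ℝ} (hs : ∀ i, 0 < s i) (ht : ∀ i, 0 < t i) :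
    relEntropy r t = relEntropy r s + ∑ i, r i * log (s i / t i) := by
  rw [relEntropy, relEntropy, ← Finset.sum_add_distrib]
  refine Finset.sum_congr rfl fun i _ => ?_
  rcases eq_or_ne (r i) 0 with h | h
  · simp [h]
  · rw [log_div h (ht i).ne', log_div h (hs i).ne', log_div (hs i).ne' (ht i).ne']
    ring

theorem relEntropy_nonneg {r s : ι → ℝ} (hr : ∀ i, 0 ≤ r i) (hs : ∀ i, 0 < s i)
    (hmass : ∑ i, r i = ∑ i, s i) : 0 ≤ relEntropy r s := by
  have key : ∀ i, 0 ≤ r i * log (r i / s i) + s i - r i := fun i => by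
    have := mul_nonneg (hs i).le
      (InformationTheory.klFun_nonneg (div_nonneg (hr i) (hs i).le))
    rw [InformationTheory.klFun_apply] at this
    rwa [mul_sub, mul_add, mul_one, ← mul_assoc, mul_div_cancel₀ _ (hs i).ne'] at this
  have := Finset.sum_nonneg fun i (_ : i ∈ univ) => key i
  simp only [Finset.sum_sub_distrib, Finset.sum_add_distrib, hmass] at this
  simpa [relEntropy] using this

theorem sum_mulVec_of_sum_col_eq_one {T : Matrix ι ι ℝ} (hT : ∀ n, ∑ m, T m n = 1)
    (r : ι → ℝ) : ∑ m, (T *ᵥ r) m = ∑ n, r n := by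
  simp only [Matrix.mulVec, dotProduct]
  rw [Finset.sum_comm]
  simp [← Finset.sum_mul, hT]

theorem mulVec_nonneg {T : Matrix ι ι ℝ} (hT : ∀ m n, 0 ≤ T m n) {r : ι → ℝ}
    (hr : ∀ i, 0 ≤ r i) (m : ι) : 0 ≤ (T *ᵥ r) m :=
  Finset.sum_nonneg fun n _ => mul_nonneg (hT m n) (hr n)

theorem relEntropy_mulVec_le {T : Matrix ι ι ℝ} (hT0 : ∀ m n, 0 ≤ T m n)
    (hT1 : ∀ n, ∑ m, T m n = 1) {r s : ι → ℝ} (hr : ∀ i, 0 ≤ r i) (hs : ∀ i, 0 < s i)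
    (hfix : T *ᵥ s = s) : relEntropy (T *ᵥ r) s ≤ relEntropy r s := by
  set φ : ℝ → ℝ := fun x => x * log x
  -- `(T r)_m / s_m` is the average of the ratios `r_n / s_n` with weights `T_mn s_n / s_m`.
  have jensen : ∀ m, φ ((T *ᵥ r) m / s m) ≤ ∑ n, (T m n * s n / s m) * φ (r n / s n) := by
    intro m
    have hw : ∑ n, T m n * s n / s m = 1 := by
      rw [← Finset.sum_div, ← div_self (hs m).ne']
      exact congrArg (· / s m) (congrFun hfix m)
    have hmean : (T *ᵥ r) m / s m = ∑ n, (T m n * s n / s m) * (r n / s n) := by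
      rw [Matrix.mulVec, dotProduct, Finset.sum_div]
      refine Finset.sum_congr rfl fun n _ => ?_
      field_simp [(hs n).ne', (hs m).ne']
    rw [hmean]
    exact convexOn_mul_log.map_sum_le
      (fun n _ => div_nonneg (mul_nonneg (hT0 m n) (hs n).le) (hs m).le) hw
      (fun n _ => Set.mem_Ici.mpr (div_nonneg (hr n) (hs n).le))
  calc relEntropy (T *ᵥ r) s = ∑ m, s m * φ ((T *ᵥ r) m / s m) :=
        relEntropy_eq_sum_mul_mul_log hs
    _ ≤ ∑ m, ∑ n, T m n * (s n * φ (r n / s n)) := by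
        refine Finset.sum_le_sum fun m _ => ?_
        calc s m * φ ((T *ᵥ r) m / s m)
            ≤ s m * ∑ n, (T m n * s n / s m) * φ (r n / s n) :=
              mul_le_mul_of_nonneg_left (jensen m) (hs m).le
          _ = ∑ n, T m n * (s n * φ (r n / s n)) := by
              rw [Finset.mul_sum]
              refine Finset.sum_congr rfl fun n _ => ?_
              field_simp [(hs m).ne']
    _ = ∑ n, s n * φ (r n / s n) := by
        rw [Finset.sum_comm]
        simp [← Finset.sum_mul, hT1]
    _ = relEntropy r s := (relEntropy_eq_sum_mul_mul_log hs).symm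

end RelEntropy

section Gibbs

variable {ι : Type*} [Fintype ι] {E d : ι → ℝ} (β : ℝ)

noncomputable def entropy (d r : ι → ℝ) : ℝ := -relEntropy r d

def meanEnergy (E r : ι → ℝ) : ℝ := ∑ i, r i * E i

noncomputable def partitionFunction (E d : ι → ℝ) (β : ℝ) : ℝ := ∑ k, d k * exp (-β * E k)

noncomputable def gibbs (E d : ι → ℝ) (β : ℝ) (n : ι) : ℝ :=
  d n * exp (-β * E n) / partitionFunction E d β

theorem partitionFunction_pos [Nonempty ι] (hd : ∀ n, 0 < d n) :
    0 < partitionFunction E d β :=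
  Finset.sum_pos (fun k _ => mul_pos (hd k) (exp_pos _)) univ_nonempty

theorem gibbs_pos (hd : ∀ n, 0 < d n) (n : ι) : 0 < gibbs E d β n :=
  have : Nonempty ι := ⟨n⟩
  div_pos (mul_pos (hd n) (exp_pos _)) (partitionFunction_pos β hd)

theorem log_gibbs_div (hd : ∀ n, 0 < d n) (n : ι) :
    log (gibbs E d β n / d n) = -β * E n - log (partitionFunction E d β) := by
  have : Nonempty ι := ⟨n⟩
  have hZ := partitionFunction_pos (E := E) β hd
  have h : gibbs E d β n / d n = exp (-β * E n) / partitionFunction E d β := by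
    rw [gibbs]
    field_simp [(hd n).ne']
  rw [h, log_div (exp_pos _).ne' hZ.ne', log_exp]

theorem entropy_eq_mul_meanEnergy_sub_relEntropy_gibbs (hd : ∀ n, 0 < d n) (r : ι → ℝ) :
    entropy d r = β * meanEnergy E r + log (partitionFunction E d β) * ∑ i, r i
      - relEntropy r (gibbs E d β) := by
  have hcross : ∑ i, r i * log (gibbs E d β i / d i)
      = -β * meanEnergy E r - log (partitionFunction E d β) * ∑ i, r i := by
    simp only [log_gibbs_div β hd, meanEnergy, Finset.mul_sum, ← Finset.sum_sub_distrib]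
    exact Finset.sum_congr rfl fun i _ => by ring
  rw [entropy, relEntropy_eq_add (gibbs_pos β hd) hd, hcross]
  ring

theorem entropy_sub_entropy_eq (hd : ∀ n, 0 < d n) {r r' : ι → ℝ}
    (hmass : ∑ i, r' i = ∑ i, r i) :
    entropy d r' - entropy d r = β * (meanEnergy E r' - meanEnergy E r)
      + relEntropy r (gibbs E d β) - relEntropy r' (gibbs E d β) := by
  rw [entropy_eq_mul_meanEnergy_sub_relEntropy_gibbs β hd r',
    entropy_eq_mul_meanEnergy_sub_relEntropy_gibbs β hd r, hmass]
  ring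

theorem entropy_sub_entropy_gibbs_le (hd : ∀ n, 0 < d n) {q : ι → ℝ} (hq : ∀ i, 0 ≤ q i)
    (hmass : ∑ i, q i = ∑ i, gibbs E d β i) :
    entropy d q - entropy d (gibbs E d β) ≤
      β * (meanEnergy E q - meanEnergy E (gibbs E d β)) := by
  have := relEntropy_nonneg hq (gibbs_pos β hd) hmass
  rw [entropy_sub_entropy_eq β hd hmass, relEntropy_self]
  linarith

theorem mul_meanEnergy_sub_le_entropy_sub_of_mulVec_gibbs (hd : ∀ n, 0 < d n)
    {T : Matrix ι ι ℝ} (hT0 : ∀ m n, 0 ≤ T m n) (hT1 : ∀ n, ∑ m, T m n = 1)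
    (hfix : T *ᵥ gibbs E d β = gibbs E d β) {r : ι → ℝ} (hr : ∀ i, 0 ≤ r i) :
    β * (meanEnergy E (T *ᵥ r) - meanEnergy E r) ≤ entropy d (T *ᵥ r) - entropy d r := by
  have := relEntropy_mulVec_le hT0 hT1 hr (gibbs_pos β hd) hfix
  rw [entropy_sub_entropy_eq β hd (sum_mulVec_of_sum_col_eq_one hT1 r)]
  linarith

end Gibbs

theorem clausius_inequalities_general {N : Type*} [Fintype N]
    (E : N → ℝ) (d : N → ℕ) (hd : ∀ n, 0 < d n) (β₀ β : ℝ)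
    (T : N → N → ℝ) (hT0 : ∀ m n, 0 ≤ T m n) (hT1 : ∀ n, ∑ m, T m n = 1)
    (p0 p q : N → ℝ)
    (hp0 : ∀ n, p0 n = (d n : ℝ) * Real.exp (-β₀ * E n) /
      (∑ k, (d k : ℝ) * Real.exp (-β₀ * E k)))
    (hfix : ∀ m, ∑ n, T m n * p0 n = p0 m)
    (hp : ∀ n, p n = (d n : ℝ) * Real.exp (-β * E n) /
      (∑ k, (d k : ℝ) * Real.exp (-β * E k)))
    (hq : ∀ m, q m = ∑ n, T m n * p n) :
    β₀ * ((∑ n, q n * E n) - (∑ n, p n * E n)) ≤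
      (-(∑ n, q n * Real.log (q n / (d n : ℝ)))) -
      (-(∑ n, p n * Real.log (p n / (d n : ℝ)))) ∧
    (-(∑ n, q n * Real.log (q n / (d n : ℝ)))) -
      (-(∑ n, p n * Real.log (p n / (d n : ℝ)))) ≤
      β * ((∑ n, q n * E n) - (∑ n, p n * E n)) := by
  have hd' : ∀ n, (0 : ℝ) < d n := fun n => Nat.cast_pos.mpr (hd n)
  obtain rfl : p0 = gibbs E (fun n => (d n : ℝ)) β₀ := funext hp0
  obtain rfl : p = gibbs E (fun n => (d n : ℝ)) β := funext hp
  obtain rfl : q = T *ᵥ gibbs E (fun n => (d n : ℝ)) β := funext hq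
  exact ⟨mul_meanEnergy_sub_le_entropy_sub_of_mulVec_gibbs β₀ hd' hT0 hT1 (funext hfix)
      fun n => (gibbs_pos β hd' n).le,
    entropy_sub_entropy_gibbs_le β hd' (mulVec_nonneg hT0 fun n => (gibbs_pos β hd' n).le)
      (sum_mulVec_of_sum_col_eq_one hT1 _)⟩

/-- The two Clausius inequalities. -/
theorem clausius_inequalities {N : Type*} [Fintype N] [Nonempty N]
    (E : N → ℝ) (d : N → ℕ) (hd : ∀ n, 0 < d n) (β₀ β : ℝ)
    (T : N → N → ℝ) (hT0 : ∀ m n, 0 ≤ T m n) (hT1 : ∀ n, ∑ m, T m n = 1)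
    (p0 p q : N → ℝ)
    (hp0 : ∀ n, p0 n = (d n : ℝ) * Real.exp (-β₀ * E n) /
      (∑ k, (d k : ℝ) * Real.exp (-β₀ * E k)))
    (hfix : ∀ m, ∑ n, T m n * p0 n = p0 m)
    (hp : ∀ n, p n = (d n : ℝ) * Real.exp (-β * E n) /
      (∑ k, (d k : ℝ) * Real.exp (-β * E k)))
    (hq : ∀ m, q m = ∑ n, T m n * p n) (hqpos : ∀ m, 0 < q m) :
    β₀ * ((∑ n, q n * E n) - (∑ n, p n * E n)) ≤
      (-(∑ n, q n * Real.log (q n / (d n : ℝ)))) -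
      (-(∑ n, p n * Real.log (p n / (d n : ℝ)))) ∧
    (-(∑ n, q n * Real.log (q n / (d n : ℝ)))) -
      (-(∑ n, p n * Real.log (p n / (d n : ℝ)))) ≤
      β * ((∑ n, q n * E n) - (∑ n, p n * E n)) :=
  clausius_inequalities_general E d hd β₀ β T hT0 hT1 p0 p q hp0 hfix hp hq
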